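/- arXiv:2002.04452 — 4 statements merged into one kernel-verified Lean document; each statement's English description precedes it below -/
import Mathlib

section
/- Let α, γ, δ be real parameters and work on the open set U = { (x, y, p, q, κ) ∈ ℝ⁵ : y > 0 }. Let g : U → (symmetric 5×5 real matrices) be given by g₁₁ = g₂₂ = α/y², g₃₃ = γ(x²+y²)/y + δq², g₄₄ = γ/y + δp², g₅₅ = δ, g₃₄ = g₄₃ = γx/y − δpq, g₃₅ = g₅₃ = δq, g₄₅ = g₅₄ = −δp, and all other entries 0 (this is the metric ds² = (α/y²)(dx²+dy²) + [γ(x²+y²)/y + δq²]dp² + [γ/y + δp²]dq² + δ dκ² + 2(γx/y − δpq)dp dq + 2δq dp dκ − 2δp dq dκ on the extended Siegel–Jacobi upper half-plane). Then each of the six vector fields F* = (1, 0, 0, −p, 0), G* = (y²−x², −2xy, −q, 0, 0), H* = (2x, 2y, −p, q, 0), P* = (0, 0, 1, 0, q), Q* = (0, 0, 0, 1, −p), R* = (0, 0, 0, 0, 1) is a Killing vector field for g; i.e., for every X among these six, every point of U and all indices λ, χ ∈ {1,…,5}: Σ_μ [ X^μ ∂_μ g_{λχ} + g_{μχ} ∂_λ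 X^μ + g_{λμ} ∂_χ X^μ ] = 0. -/
/-!
The Killing expression is the Lie derivative `X^μ ∂_μ g + (DX)ᵀ g + g (DX)`. By linearity of the
Fréchet derivative its first term is the directional derivative `Dg(v)[X v]`, which is computed
once for the metric; for each field the 25 component equations are then rational identities in
`x, y, p, q` whose denominators are powers of `y`.
-/

open Matrix

namespace Stmt14

/-- The partial derivative `∂_i f` of a function on `ℝ⁵` in coordinates. -/
noncomputable def pd (i : Fin 5) (f : (Fin 5 → ℝ) → ℝ) (x : Fin 5 → ℝ) : ℝ :=
  fderiv ℝ f x (Pi.single i 1)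

/-- The three-parameter invariant metric on the extended Siegel–Jacobi upper half-plane
in the coordinates `(x, y, p, q, κ)`. -/
noncomputable def metric (α γ δ : ℝ) (v : Fin 5 → ℝ) : Matrix (Fin 5) (Fin 5) ℝ :=
  !![α / (v 1) ^ 2, 0, 0, 0, 0;
     0, α / (v 1) ^ 2, 0, 0, 0;
     0, 0, γ * ((v 0) ^ 2 + (v 1) ^ 2) / (v 1) + δ * (v 3) ^ 2,
       γ * (v 0) / (v 1) - δ * (v 2) * (v 3), δ * (v 3);
     0, 0, γ * (v 0) / (v 1) - δ * (v 2) * (v 3), γ / (v 1) + δ * (v 2) ^ 2, -(δ * (v 2));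
     0, 0, δ * (v 3), -(δ * (v 2)), δ]

/-- `X` satisfies the Killing equations for the metric `g` at `v`. -/
def IsKillingAt (g : (Fin 5 → ℝ) → Matrix (Fin 5) (Fin 5) ℝ)
    (X : (Fin 5 → ℝ) → Fin 5 → ℝ) (v : Fin 5 → ℝ) : Prop :=
  ∀ lam chi : Fin 5,
    (∑ mu : Fin 5, (X v mu * pd mu (fun u => g u lam chi) v
      + g v mu chi * pd lam (fun u => X u mu) v
      + g v lam mu * pd chi (fun u => X u mu) v)) = 0

section DirectionalDerivative

variable {𝕜 E : Type*} [NontriviallyNormedField 𝕜] [NormedAddCommGroup E] [NormedSpace 𝕜 E]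
  {f g : E → 𝕜} {v w : E}

theorem fderiv_fun_inv_apply (hg : DifferentiableAt 𝕜 g v) (hg0 : g v ≠ 0) :
    fderiv 𝕜 (fun u => (g u)⁻¹) v w = -fderiv 𝕜 g v w / g v ^ 2 := by
  have h := (hasDerivAt_inv hg0).comp_hasFDerivAt v hg.hasFDerivAt
  rw [Function.comp_def] at h
  simp [h.fderiv]
  ring

theorem fderiv_fun_div_apply (hf : DifferentiableAt 𝕜 f v) (hg : DifferentiableAt 𝕜 g v)
    (hg0 : g v ≠ 0) :
    fderiv 𝕜 (fun u => f u / g u) v w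
      = (fderiv 𝕜 f v w * g v - f v * fderiv 𝕜 g v w) / g v ^ 2 := by
  simp only [div_eq_mul_inv]
  rw [fderiv_fun_mul hf (hg.fun_inv hg0)]
  simp [fderiv_fun_inv_apply hg hg0]
  field_simp
  ring

end DirectionalDerivative

theorem fderiv_coord_apply {𝕜 ι : Type*} [NontriviallyNormedField 𝕜] [Fintype ι] (j : ι)
    (v w : ι → 𝕜) :
    fderiv 𝕜 (fun u : ι → 𝕜 => u j) v w = w j := by
  rw [(hasFDerivAt_apply j v).fderiv]
  rfl

theorem sum_mul_pd (f : (Fin 5 → ℝ) → ℝ) (v w : Fin 5 → ℝ) :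
    ∑ μ, w μ * pd μ f v = fderiv ℝ f v w :=
  calc ∑ μ, w μ * pd μ f v = ∑ μ, fderiv ℝ f v (Pi.single μ (w μ)) := by
        refine Finset.sum_congr rfl fun μ _ => ?_
        rw [pd, ← smul_eq_mul, ← map_smul, ← Pi.single_smul', smul_eq_mul, mul_one]
    _ = fderiv ℝ f v w := by rw [← map_sum, Finset.univ_sum_single]

theorem isKillingAt_iff_fderiv (g : (Fin 5 → ℝ) → Matrix (Fin 5) (Fin 5) ℝ)
    (X : (Fin 5 → ℝ) → Fin 5 → ℝ) (v : Fin 5 → ℝ) :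
    IsKillingAt g X v ↔ ∀ lam chi : Fin 5, fderiv ℝ (fun u => g u lam chi) v (X v)
      + ∑ mu, (g v mu chi * pd lam (fun u => X u mu) v + g v lam mu * pd chi (fun u => X u mu) v)
      = 0 := by
  simp only [IsKillingAt, Finset.sum_add_distrib, sum_mul_pd, add_assoc]

noncomputable def metricDeriv (α γ δ : ℝ) (v w : Fin 5 → ℝ) : Matrix (Fin 5) (Fin 5) ℝ :=
  !![-2 * α * w 1 / (v 1) ^ 3, 0, 0, 0, 0;
     0, -2 * α * w 1 / (v 1) ^ 3, 0, 0, 0;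
     0, 0, γ * (2 * v 0 * v 1 * w 0 + ((v 1) ^ 2 - (v 0) ^ 2) * w 1) / (v 1) ^ 2
        + 2 * δ * v 3 * w 3,
       γ * (v 1 * w 0 - v 0 * w 1) / (v 1) ^ 2 - δ * (v 3 * w 2 + v 2 * w 3), δ * w 3;
     0, 0, γ * (v 1 * w 0 - v 0 * w 1) / (v 1) ^ 2 - δ * (v 3 * w 2 + v 2 * w 3),
       -(γ * w 1) / (v 1) ^ 2 + 2 * δ * v 2 * w 2, -(δ * w 2);
     0, 0, δ * w 3, -(δ * w 2), 0]

theorem fderiv_metric_apply (α γ δ : ℝ) {v : Fin 5 → ℝ} (hy : v 1 ≠ 0) (lam chi : Fin 5)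
    (w : Fin 5 → ℝ) :
    fderiv ℝ (fun u => metric α γ δ u lam chi) v w = metricDeriv α γ δ v w lam chi := by
  fin_cases lam <;> fin_cases chi <;>
    simp only [Fin.zero_eta, Fin.mk_one, Fin.reduceFinMk, Fin.isValue, metric, metricDeriv,
      Matrix.of_apply, Matrix.cons_val] <;>
    -- simp hands over the side goal `g v ≠ 0` as an unreduced beta-redex, hence `beta_reduce`
    simp (disch := first | fun_prop (disch := positivity) | (beta_reduce; positivity)) only
      [fderiv_fun_add, fderiv_fun_sub, fderiv_fun_mul, fderiv_fun_pow, fderiv_fun_neg,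
      fderiv_fun_div_apply, fderiv_const_apply, fderiv_coord_apply, _root_.add_apply,
      _root_.sub_apply, _root_.neg_apply, _root_.smul_apply, _root_.zero_apply, smul_eq_mul] <;>
    field_simp <;>
    ring

set_option maxHeartbeats 400000 in
theorem fundamental_vector_fields_are_Killing (α γ δ : ℝ) (v : Fin 5 → ℝ) (hy : 0 < v 1) :
    -- F* = ∂_x − p ∂_q
    IsKillingAt (metric α γ δ) (fun u => ![1, 0, 0, -(u 2), 0]) v ∧
    -- G* = (y² − x²) ∂_x − 2xy ∂_y − q ∂_p
    IsKillingAt (metric α γ δ)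
      (fun u => ![(u 1) ^ 2 - (u 0) ^ 2, -(2 * u 0 * u 1), -(u 3), 0, 0]) v ∧
    -- H* = 2x ∂_x + 2y ∂_y − p ∂_p + q ∂_q
    IsKillingAt (metric α γ δ) (fun u => ![2 * u 0, 2 * u 1, -(u 2), u 3, 0]) v ∧
    -- P* = ∂_p + q ∂_κ
    IsKillingAt (metric α γ δ) (fun u => ![0, 0, 1, 0, u 3]) v ∧
    -- Q* = ∂_q − p ∂_κ
    IsKillingAt (metric α γ δ) (fun u => ![0, 0, 0, 1, -(u 2)]) v ∧
    -- R* = ∂_κ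
    IsKillingAt (metric α γ δ) (fun u => ![0, 0, 0, 0, 1]) v := by
  have hy' : v 1 ≠ 0 := hy.ne'
  refine ⟨?_, ?_, ?_, ?_, ?_, ?_⟩ <;>
  · rw [isKillingAt_iff_fderiv]
    intro lam chi
    rw [fderiv_metric_apply α γ δ hy']
    fin_cases lam <;> fin_cases chi <;>
    · simp only [Fin.sum_univ_five, Fin.zero_eta, Fin.mk_one, Fin.reduceFinMk, Fin.isValue, metric,
        metricDeriv, Matrix.of_apply, Matrix.cons_val, pd]
      simp (disch := fun_prop) only [fderiv_fun_sub, fderiv_fun_mul, fderiv_fun_pow, fderiv_fun_neg,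
        fderiv_const_apply, fderiv_coord_apply, _root_.add_apply, _root_.sub_apply,
        _root_.neg_apply, _root_.smul_apply, _root_.zero_apply, smul_eq_mul, Pi.single_apply,
        Fin.reduceEq, ite_true, ite_false]
      field_simp
      ring

end Stmt14
end

section
/- Let α > 0, β > 0 be real, set γ = 1/√β − √β/α and ζ = √β/α − 1/(2√β). Then for all real a₂, b₂, c₂, d₂, e₂, the 5×5 real matrix A with rows (0, γc₂, −γb₂, 0, 0), (−ζc₂, 0, ζa₂, 0, 0), (−3b₂/√β, 3a₂/√β, 0, (1/√α + 1/√β)e₂, −(1/√α + 1/√β)d₂), (−e₂, −d₂, −e₂, b₂, a₂ + c₂), (−d₂/√α, e₂/√α, d₂/√β, a₂/√α − c₂/√β, −b₂/√α) has determinant zero. Consequently, for any X₂ in the reductive complement m = ⟨L¹,…,L⁵⟩ there is a nonzero X₁ ∈ m solving the natural-reductivity linear system for all X₃ ∈ m; this is the key step showing the extended Siegel–Jacobi upper half-plane X̃^J_1 is not naturally reductive with respect to its three-parameter invariant metric. -/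
/-! The matrix `A` is the natural-reductivity system for `X₁` at a fixed `X₂ = (a₂, …, e₂)`.
Taking `X₁ = X₂` makes the condition `g([X₂,X₃]_m, X₂) + g(X₂, [X₃,X₂]_m) = 0` hold trivially by
antisymmetry of the bracket, so `X₂` itself lies in the kernel of `A`; when `X₂ = 0` the matrix
vanishes. Either way `A` has a nonzero kernel vector, hence `det A = 0`. -/

open Matrix Real

namespace Stmt16

theorem Matrix.exists_ne_zero_mulVec_eq_zero_of_mulVec_eq_zero {n R : Type*} [Fintype n]
    [Nonempty n] [CommRing R] [Nontrivial R] {A : Matrix n n R} {v : n → R}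
    (hv : A *ᵥ v = 0) (hA : v = 0 → A = 0) : ∃ x, x ≠ 0 ∧ A *ᵥ x = 0 := by
  by_cases hv0 : v = 0
  · refine ⟨fun _ => 1, fun h => ?_, by simp [hA hv0]⟩
    exact one_ne_zero (congrFun h (Classical.arbitrary n))
  · exact ⟨v, hv0, hv⟩

theorem natural_reductivity_matrix_det_zero_general (α β : ℝ)
    (a₂ b₂ c₂ d₂ e₂ : ℝ) :
    let γ := 1 / Real.sqrt β - Real.sqrt β / α
    let ζ := Real.sqrt β / α - 1 / (2 * Real.sqrt β)
    let A : Matrix (Fin 5) (Fin 5) ℝ :=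
      !![0, γ * c₂, -(γ * b₂), 0, 0;
         -(ζ * c₂), 0, ζ * a₂, 0, 0;
         -(3 * b₂ / Real.sqrt β), 3 * a₂ / Real.sqrt β, 0,
           (1 / Real.sqrt α + 1 / Real.sqrt β) * e₂,
           -((1 / Real.sqrt α + 1 / Real.sqrt β) * d₂);
         -e₂, -d₂, -e₂, b₂, a₂ + c₂;
         -(d₂ / Real.sqrt α), e₂ / Real.sqrt α, d₂ / Real.sqrt β,
           a₂ / Real.sqrt α - c₂ / Real.sqrt β, -(b₂ / Real.sqrt α)]
    A.det = 0 ∧ ∃ x : Fin 5 → ℝ, x ≠ 0 ∧ A.mulVec x = 0 := by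
  intro γ ζ A
  have hX₂ : A *ᵥ ![a₂, b₂, c₂, d₂, e₂] = 0 := by
    ext i
    fin_cases i <;> simp [A, Matrix.mulVec, dotProduct, Fin.sum_univ_five] <;> ring
  have hA : ![a₂, b₂, c₂, d₂, e₂] = 0 → A = 0 := by
    intro h
    obtain ⟨rfl, rfl, rfl, rfl, rfl⟩ : a₂ = 0 ∧ b₂ = 0 ∧ c₂ = 0 ∧ d₂ = 0 ∧ e₂ = 0 :=
      ⟨congrFun h 0, congrFun h 1, congrFun h 2, congrFun h 3, congrFun h 4⟩
    ext i j
    fin_cases i <;> fin_cases j <;> simp [A]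
  have hker := Matrix.exists_ne_zero_mulVec_eq_zero_of_mulVec_eq_zero hX₂ hA
  exact ⟨Matrix.exists_mulVec_eq_zero_iff.mp hker, hker⟩

theorem natural_reductivity_matrix_det_zero (α β : ℝ) (hα : 0 < α) (hβ : 0 < β)
    (a₂ b₂ c₂ d₂ e₂ : ℝ) :
    let γ := 1 / Real.sqrt β - Real.sqrt β / α
    let ζ := Real.sqrt β / α - 1 / (2 * Real.sqrt β)
    let A : Matrix (Fin 5) (Fin 5) ℝ :=
      !![0, γ * c₂, -(γ * b₂), 0, 0;
         -(ζ * c₂), 0, ζ * a₂, 0, 0;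
         -(3 * b₂ / Real.sqrt β), 3 * a₂ / Real.sqrt β, 0,
           (1 / Real.sqrt α + 1 / Real.sqrt β) * e₂,
           -((1 / Real.sqrt α + 1 / Real.sqrt β) * d₂);
         -e₂, -d₂, -e₂, b₂, a₂ + c₂;
         -(d₂ / Real.sqrt α), e₂ / Real.sqrt α, d₂ / Real.sqrt β,
           a₂ / Real.sqrt α - c₂ / Real.sqrt β, -(b₂ / Real.sqrt α)]
    A.det = 0 ∧ ∃ x : Fin 5 → ℝ, x ≠ 0 ∧ A.mulVec x = 0 :=
  natural_reductivity_matrix_det_zero_general α β a₂ b₂ c₂ d₂ e₂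

end Stmt16
end

section
/- Let r > 0 be real. A vector (a, b, c, d, e) ∈ ℝ⁵ satisfies the system r·b·c + d·e = 0, −r·a·c + d² − e² = 0, b·d + e·(a + c) = 0, r·c·d + b·e − a·d = 0 if and only if it has one of the following forms: (i) a = b = d = e = 0 (c arbitrary); (ii) c = d = e = 0 (a, b arbitrary); (iii) there exist c ∈ ℝ and ε ∈ {−1, 1} with a = r·c, b = 0, d = ε·r·c, e = 0; (iv) there exist a ∈ ℝ and ε ∈ {−1, 1} with b = 0, c = −a, d = 0, e = ε·√r·a; (v) there exist e ∈ ℝ and ε₁, ε₂ ∈ {−1, 1} with a = ε₁ε₂(1 − r)e/√r, b = ε₁·e, c = −ε₁ε₂·e/√r, d = ε₂·√r·e. (These are the geodesic vectors X = aL¹ + bL² + cL³ + dL⁴ + eL⁵ + fL⁶, f arbitrary, of the Siegel–Jacobi upper half-plane X^J_1 with respect to the balanced metric, with r = √(α/β).) -/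
/-!
Number the four equations `h₁, …, h₄`. Split according to whether `d` and `e` vanish. If both
do, the system is just `rbc = rac = 0`. If exactly one does, the equations force `b = 0` and one
linear relation, and the remaining quadratic one, `d² = (rc)²` or `e² = (√r a)²`, gives the sign.
If neither vanishes, `d·h₁ − rc·h₃` and `d·h₄ − e·h₃` eliminate `b`, giving `d² = rc(a + c)`,
`e² = rc²` and `a = (r − 1)c`; then `d = ±rc`, `e = ±√r c`, and `h₃` returns `b = ∓e`.
Only `(√r)² = r` is used, so the argument is algebra over any field, with `s² = r` for `√r`.
-/

open Real

namespace Stmt17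

section GeodesicSystem

variable {K : Type*} [Field K] {r s a b c d e ε ε₁ ε₂ : K}

def GeodesicSystem (r a b c d e : K) : Prop :=
  r * b * c + d * e = 0 ∧ -(r * a * c) + d ^ 2 - e ^ 2 = 0 ∧
    b * d + e * (a + c) = 0 ∧ r * c * d + b * e - a * d = 0

lemma exists_sign_of_sq_eq_sq {x y : K} (h : x ^ 2 = y ^ 2) :
    ∃ ε : K, (ε = 1 ∨ ε = -1) ∧ x = ε * y := by
  rcases sq_eq_sq_iff_eq_or_eq_neg.mp h with rfl | rfl
  · exact ⟨1, Or.inl rfl, (one_mul x).symm⟩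
  · exact ⟨-1, Or.inr rfl, by ring⟩

namespace GeodesicSystem

lemma of_d_eq_zero_of_e_eq_zero (h : GeodesicSystem r a b c 0 0) (hr : r ≠ 0) :
    (a = 0 ∧ b = 0) ∨ c = 0 := by
  obtain ⟨h₁, h₂, -, -⟩ := h
  by_cases hc : c = 0
  · exact Or.inr hc
  · left
    constructor
    · simpa [hr, hc] using h₂
    · simpa [hr, hc] using h₁

lemma of_e_eq_zero (h : GeodesicSystem r a b c d e) (he : e = 0) (hd : d ≠ 0) :
    ∃ ε : K, (ε = 1 ∨ ε = -1) ∧ a = r * c ∧ b = 0 ∧ d = ε * (r * c) ∧ e = 0 := by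
  subst he
  obtain ⟨-, h₂, h₃, h₄⟩ := h
  have hb : b = 0 := by simpa [hd] using h₃
  have ha : a = r * c := by
    have : (r * c - a) * d = 0 := by linear_combination h₄
    exact (sub_eq_zero.mp ((mul_eq_zero.mp this).resolve_right hd)).symm
  obtain ⟨ε, hε, hdε⟩ := exists_sign_of_sq_eq_sq (x := d) (y := r * c) <| by
    linear_combination h₂ + r * c * ha
  exact ⟨ε, hε, ha, hb, hdε, rfl⟩

lemma of_d_eq_zero (h : GeodesicSystem r a b c d e) (hs : s ^ 2 = r) (hd : d = 0) (he : e ≠ 0) :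
    ∃ ε : K, (ε = 1 ∨ ε = -1) ∧ b = 0 ∧ c = -a ∧ d = 0 ∧ e = ε * (s * a) := by
  subst hd
  obtain ⟨h₁, h₂, h₃, -⟩ := h
  have hrac : r * a * c ≠ 0 := by
    rw [show r * a * c = -e ^ 2 by linear_combination -h₂]
    exact neg_ne_zero.mpr (pow_ne_zero 2 he)
  have hr : r ≠ 0 := left_ne_zero_of_mul (left_ne_zero_of_mul hrac)
  have hc : c ≠ 0 := right_ne_zero_of_mul hrac
  have hb : b = 0 := by simpa [hr, hc] using h₁
  have hca : c = -a := by
    have : e * (a + c) = 0 := by linear_combination h₃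
    exact eq_neg_of_add_eq_zero_right ((mul_eq_zero.mp this).resolve_left he)
  obtain ⟨ε, hε, heε⟩ := exists_sign_of_sq_eq_sq (x := e) (y := s * a) <| by
    rw [hca] at h₂
    linear_combination -h₂ - a ^ 2 * hs
  exact ⟨ε, hε, hb, hca, rfl, heε⟩

lemma d_sq_eq (h : GeodesicSystem r a b c d e) (he : e ≠ 0) : d ^ 2 = r * c * (a + c) := by
  obtain ⟨h₁, -, h₃, -⟩ := h
  have : e * (d ^ 2 - r * c * (a + c)) = 0 := by linear_combination d * h₁ - r * c * h₃
  exact sub_eq_zero.mp ((mul_eq_zero.mp this).resolve_left he)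

lemma e_sq_eq (h : GeodesicSystem r a b c d e) (he : e ≠ 0) : e ^ 2 = r * c ^ 2 := by
  linear_combination -h.2.1 + h.d_sq_eq he

lemma r_mul_c_ne_zero (h : GeodesicSystem r a b c d e) (he : e ≠ 0) : r * c ≠ 0 := by
  intro hrc
  exact he (pow_eq_zero_iff two_ne_zero |>.mp (by rw [h.e_sq_eq he]; linear_combination c * hrc))

lemma a_eq_sub_one_mul (h : GeodesicSystem r a b c d e) (hd : d ≠ 0) (he : e ≠ 0) :
    a = (r - 1) * c := by
  have hd2 := h.d_sq_eq he
  have he2 := h.e_sq_eq he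
  have hrc := h.r_mul_c_ne_zero he
  have hac : a + c ≠ 0 := by
    intro hac
    exact hd (pow_eq_zero_iff two_ne_zero |>.mp (by rw [hd2, hac, mul_zero]))
  obtain ⟨-, -, h₃, h₄⟩ := h
  have : r * c * (a + c) * (r * c - a - c) = 0 := by
    linear_combination d * h₄ - e * h₃ - (r * c - a) * hd2 + (a + c) * he2
  linear_combination -(mul_eq_zero.mp this |>.resolve_left (mul_ne_zero hrc hac))

lemma of_ne_zero (h : GeodesicSystem r a b c d e) (hs : s ^ 2 = r) (hd : d ≠ 0) (he : e ≠ 0) :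
    ∃ ε₁ ε₂ : K, (ε₁ = 1 ∨ ε₁ = -1) ∧ (ε₂ = 1 ∨ ε₂ = -1) ∧
      a = ε₁ * ε₂ * ((1 - r) / s) * e ∧ b = ε₁ * e ∧
      c = -(ε₁ * ε₂ * (e / s)) ∧ d = ε₂ * (s * e) := by
  have ha := h.a_eq_sub_one_mul hd he
  have hd2 := h.d_sq_eq he
  have he2 := h.e_sq_eq he
  have hrc := h.r_mul_c_ne_zero he
  have hs0 : s ≠ 0 := by rintro rfl; simp [← hs] at hrc
  obtain ⟨τ, hτ, hdτ⟩ := exists_sign_of_sq_eq_sq (x := d) (y := r * c) <| by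
    linear_combination hd2 + r * c * ha
  obtain ⟨σ, hσ, heσ⟩ := exists_sign_of_sq_eq_sq (x := e) (y := s * c) <| by
    linear_combination he2 - c ^ 2 * hs
  have hτ2 : τ ^ 2 = 1 := sq_eq_one_iff.mpr hτ
  have hσ2 : σ ^ 2 = 1 := sq_eq_one_iff.mpr hσ
  have hb : b = -τ * e := by
    have : r * c * (τ * b + e) = 0 := by linear_combination h.2.2.1 - b * hdτ - e * ha
    have hτb := (mul_eq_zero.mp this).resolve_left hrc
    linear_combination τ * hτb - b * hτ2
  refine ⟨-τ, τ * σ, sq_eq_one_iff.mp (by linear_combination hτ2),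
    sq_eq_one_iff.mp (by linear_combination σ ^ 2 * hτ2 + hσ2), ?_, hb, ?_, ?_⟩
  · rw [ha, heσ]
    field_simp
    rw [hτ2, hσ2]
    ring
  · rw [heσ]
    field_simp
    rw [hτ2, hσ2]
    ring
  · rw [hdτ, heσ, ← hs]
    linear_combination -τ * s ^ 2 * c * hσ2

end GeodesicSystem

lemma geodesicSystem_e_eq_zero (hε : ε ^ 2 = 1) :
    GeodesicSystem r (r * c) 0 c (ε * (r * c)) 0 :=
  ⟨by ring, by linear_combination (r * c) ^ 2 * hε, by ring, by ring⟩

lemma geodesicSystem_d_eq_zero (hs : s ^ 2 = r) (hε : ε ^ 2 = 1) :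
    GeodesicSystem r a 0 (-a) 0 (ε * (s * a)) :=
  ⟨by ring, by linear_combination -a ^ 2 * hs - a ^ 2 * s ^ 2 * hε, by ring, by ring⟩

lemma geodesicSystem_two_signs (hs : s ^ 2 = r) (hs0 : s ≠ 0) (hε₁ : ε₁ ^ 2 = 1)
    (hε₂ : ε₂ ^ 2 = 1) :
    GeodesicSystem r (ε₁ * ε₂ * ((1 - r) / s) * e) (ε₁ * e) (-(ε₁ * ε₂ * (e / s)))
      (ε₂ * (s * e)) e := by
  subst hs
  refine ⟨?_, ?_, ?_, ?_⟩ <;> field_simp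
  · linear_combination -s * e ^ 2 * ε₂ * hε₁
  · linear_combination e ^ 2 * ε₂ ^ 2 * (1 - s ^ 2) * hε₁ + e ^ 2 * hε₂
  · ring
  · linear_combination -ε₁ * e ^ 2 * hε₂

end GeodesicSystem

theorem geodesic_vectors_siegel_jacobi (r : ℝ) (hr : 0 < r) (a b c d e : ℝ) :
    (r * b * c + d * e = 0 ∧
     -(r * a * c) + d ^ 2 - e ^ 2 = 0 ∧
     b * d + e * (a + c) = 0 ∧
     r * c * d + b * e - a * d = 0) ↔
    -- (i) a = b = d = e = 0, c arbitrary
    ((a = 0 ∧ b = 0 ∧ d = 0 ∧ e = 0) ∨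
    -- (ii) c = d = e = 0, a, b arbitrary
     (c = 0 ∧ d = 0 ∧ e = 0) ∨
    -- (iii) a = r c, b = 0, d = ± r c, e = 0
     (∃ ε : ℝ, (ε = 1 ∨ ε = -1) ∧ a = r * c ∧ b = 0 ∧ d = ε * (r * c) ∧ e = 0) ∨
    -- (iv) b = 0, c = −a, d = 0, e = ± √r a
     (∃ ε : ℝ, (ε = 1 ∨ ε = -1) ∧ b = 0 ∧ c = -a ∧ d = 0 ∧ e = ε * (Real.sqrt r * a)) ∨
    -- (v) a = ε₁ε₂(1 − r)e/√r, b = ε₁ e, c = −ε₁ε₂ e/√r, d = ε₂ √r e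
     (∃ ε₁ ε₂ : ℝ, (ε₁ = 1 ∨ ε₁ = -1) ∧ (ε₂ = 1 ∨ ε₂ = -1) ∧
       a = ε₁ * ε₂ * ((1 - r) / Real.sqrt r) * e ∧ b = ε₁ * e ∧
       c = -(ε₁ * ε₂ * (e / Real.sqrt r)) ∧ d = ε₂ * (Real.sqrt r * e))) := by
  have hs : √r ^ 2 = r := sq_sqrt hr.le
  change GeodesicSystem r a b c d e ↔ _
  constructor
  · intro h
    rcases eq_or_ne e 0 with he | he <;> rcases eq_or_ne d 0 with hd | hd
    · subst he hd
      rcases h.of_d_eq_zero_of_e_eq_zero hr.ne' with ⟨ha, hb⟩ | hc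
      · exact Or.inl ⟨ha, hb, rfl, rfl⟩
      · exact Or.inr <| Or.inl ⟨hc, rfl, rfl⟩
    · exact Or.inr <| Or.inr <| Or.inl <| h.of_e_eq_zero he hd
    · exact Or.inr <| Or.inr <| Or.inr <| Or.inl <| h.of_d_eq_zero hs hd he
    · exact Or.inr <| Or.inr <| Or.inr <| Or.inr <| h.of_ne_zero hs hd he
  · rintro (⟨rfl, rfl, rfl, rfl⟩ | ⟨rfl, rfl, rfl⟩ | ⟨ε, hε, rfl, rfl, rfl, rfl⟩ |
      ⟨ε, hε, rfl, rfl, rfl, rfl⟩ | ⟨ε₁, ε₂, hε₁, hε₂, rfl, rfl, rfl, rfl⟩)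
    · simp [GeodesicSystem]
    · simp [GeodesicSystem]
    · exact geodesicSystem_e_eq_zero (sq_eq_one_iff.mpr hε)
    · exact geodesicSystem_d_eq_zero hs (sq_eq_one_iff.mpr hε)
    · exact geodesicSystem_two_signs hs (sqrt_pos.mpr hr).ne' (sq_eq_one_iff.mpr hε₁)
        (sq_eq_one_iff.mpr hε₂)

end Stmt17
end

section
/- Let F₃(r) = r³ + r − 1 and F₂(r) = r² − r + 1, and let R₃ be the unique real root of F₃. Let r > R₃ be real (so r > 0 and F₃(r) > 0). A vector (a, b, c, d, e) ∈ ℝ⁵ satisfies the system (r + 1/r)·b·c + d·e = 0, −(r + 2/r)·a·c + d² − e² = 0, −r·a·b + (1 − r)·d·e = 0, b·d + e·(a + c) = 0, r·c·d + b·e − a·d = 0 if and only if it has one of the following forms: (i) there exist e ∈ ℝ and ε₁, ε₂ ∈ {−1, 1} with a = ε₁ε₂(1 − r)·√((1 + r²)/(r·F₂(r)))·e, b = ε₂·√(F₃(r)/(r(r² + 1)))·e, c = −ε₁ε₂·r·√(r/((r² + 1)·F₂(r)))·e, d = ε₁·√(F₃(r)/F₂(r))·e; (ii) there exist e ∈ ℝ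 and ε ∈ {−1, 1} with a = ε·√(r/(r² + 2))·e, b = 0, c = −a, d = 0; (iii) there exist c ∈ ℝ and ε ∈ {−1, 1} with a = r·c, b = 0, d = ε·√(2 + r²)·c, e = 0; (iv) a = b = d = e = 0 (c arbitrary); (v) a = c = d = e = 0 (b arbitrary); (vi) b = c = d = e = 0 (a arbitrary). (These are the geodesic vectors X = aL¹ + ⋯ + eL⁵ + fL⁶, f arbitrary, of the extended Siegel–Jacobi upper half-plane X̃^J_1 with respect to its three-parameter invariant metric.) -/
/-!
Clear the denominators `r` and split according to whether `d` and `e` vanish. For `d = e = 0`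
the system says `ab = bc = ca = 0`. If exactly one of `d`, `e` vanishes, it is linear apart from
one quadratic relation, `(r² + 2) a² = r e²` resp. `d² = (2 + r²) c²`, whose square roots give (ii)
and (iii). If `d e ≠ 0`, eliminating `b` with the last equation and combining the result with the
first and third gives `(a - r c) (r² a - (r - 1) (r² + 1) c) = 0` with `a ≠ r c`; then `c²`, `d²`
and `b e` are fixed multiples of `e²`, and taking square roots gives (i). Those roots are real
because `F₃(r) > 0`, which is where `r > R₃` enters.
-/

open Real

namespace Stmt18

lemma exists_sign_mul_iff_sq_eq_sq {R : Type*} [CommRing R] [NoZeroDivisors R] {x y : R} :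
    (∃ ε : R, (ε = 1 ∨ ε = -1) ∧ x = ε * y) ↔ x ^ 2 = y ^ 2 := by
  rw [sq_eq_sq_iff_eq_or_eq_neg]
  constructor
  · rintro ⟨ε, rfl | rfl, rfl⟩ <;> simp
  · rintro (rfl | rfl)
    · exact ⟨1, Or.inl rfl, (one_mul _).symm⟩
    · exact ⟨-1, Or.inr rfl, (neg_one_mul _).symm⟩

lemma exists_sign_mul_sqrt_mul_iff {x q e : ℝ} (hq : 0 ≤ q) :
    (∃ ε : ℝ, (ε = 1 ∨ ε = -1) ∧ x = ε * √q * e) ↔ x ^ 2 = q * e ^ 2 := by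
  simp_rw [mul_assoc, exists_sign_mul_iff_sq_eq_sq, mul_pow, sq_sqrt hq]

lemma mul_sqrt_eq_mul_sqrt {p q x y : ℝ} (hp : 0 ≤ p) (hq : 0 ≤ q)
    (h : p ^ 2 * x = q ^ 2 * y) :
    p * √x = q * √y := by
  rw [← sqrt_sq hp, ← sqrt_sq hq, ← sqrt_mul (sq_nonneg _), ← sqrt_mul (sq_nonneg _), h]

lemma pairwise_mul_eq_zero_iff {R : Type*} [MulZeroClass R] [NoZeroDivisors R] {a b c : R} :
    (a * b = 0 ∧ b * c = 0 ∧ a * c = 0) ↔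
      (a = 0 ∧ b = 0) ∨ (a = 0 ∧ c = 0) ∨ (b = 0 ∧ c = 0) := by
  simp only [mul_eq_zero]
  tauto

lemma sq_sub_self_add_one_pos (r : ℝ) : 0 < r ^ 2 - r + 1 := by
  nlinarith [sq_nonneg (2 * r - 1)]

def GeodesicSystem (r a b c d e : ℝ) : Prop :=
  (r ^ 2 + 1) * (b * c) + r * (d * e) = 0 ∧
  (r ^ 2 + 2) * (a * c) = r * (d ^ 2 - e ^ 2) ∧
  r * (a * b) = (1 - r) * (d * e) ∧
  b * d + e * (a + c) = 0 ∧
  b * e = d * (a - r * c)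

lemma geodesicSystem_iff {r : ℝ} (hr : r ≠ 0) {a b c d e : ℝ} :
    ((r + 1 / r) * b * c + d * e = 0 ∧
     -((r + 2 / r) * a * c) + d ^ 2 - e ^ 2 = 0 ∧
     -(r * a * b) + (1 - r) * d * e = 0 ∧
     b * d + e * (a + c) = 0 ∧
     r * c * d + b * e - a * d = 0) ↔ GeodesicSystem r a b c d e := by
  have h1 : r * ((r + 1 / r) * b * c + d * e) = (r ^ 2 + 1) * (b * c) + r * (d * e) := by
    field_simp
  have h2 : r * (-((r + 2 / r) * a * c) + d ^ 2 - e ^ 2) =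
      r * (d ^ 2 - e ^ 2) - (r ^ 2 + 2) * (a * c) := by
    field_simp; ring
  refine and_congr ?_ (and_congr ?_ (and_congr ?_ (and_congr Iff.rfl ?_)))
  · rw [← mul_eq_zero_iff_left hr, h1]
  · rw [← mul_eq_zero_iff_left hr, h2, sub_eq_zero, eq_comm]
  · constructor <;> intro h <;> linear_combination -h
  · constructor <;> intro h <;> linear_combination h

section
variable {r a b c d e : ℝ}

lemma geodesicSystem_zero_zero_iff (hr : 0 < r) :
    GeodesicSystem r a b c 0 0 ↔ a * b = 0 ∧ b * c = 0 ∧ a * c = 0 := by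
  have h1 : r ^ 2 + 1 ≠ 0 := by positivity
  have h2 : r ^ 2 + 2 ≠ 0 := by positivity
  simp only [GeodesicSystem, mul_zero, add_zero, mul_eq_zero, h1, h2, hr.ne', false_or, ne_eq,
    OfNat.ofNat_ne_zero, not_false_eq_true, zero_pow, sub_self, zero_mul, and_self, and_true]
  tauto

lemma GeodesicSystem.of_d_eq_zero (hr : 0 < r) (h : GeodesicSystem r a b c 0 e) (he : e ≠ 0) :
    b = 0 ∧ c = -a ∧ a ^ 2 = r / (r ^ 2 + 2) * e ^ 2 := by
  obtain ⟨-, h2, -, h4, h5⟩ := h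
  have hb : b = 0 := by simpa [he] using h5
  have hc : c = -a := by
    have : e * (a + c) = 0 := by simpa using h4
    linear_combination (mul_eq_zero_iff_left he).1 this
  refine ⟨hb, hc, ?_⟩
  rw [div_mul_eq_mul_div, eq_div_iff (by positivity)]
  linear_combination -h2 + (r ^ 2 + 2) * a * hc

lemma geodesicSystem_of_d_eq_zero (hr : 0 < r) (hb : b = 0) (hc : c = -a)
    (ha : a ^ 2 = r / (r ^ 2 + 2) * e ^ 2) : GeodesicSystem r a b c 0 e := by
  subst hb hc
  refine ⟨by ring, ?_, by ring, by ring, by ring⟩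
  rw [div_mul_eq_mul_div, eq_div_iff (by positivity)] at ha
  linear_combination -ha

lemma GeodesicSystem.of_e_eq_zero (hr : 0 < r) (h : GeodesicSystem r a b c d 0) (hd : d ≠ 0) :
    b = 0 ∧ a = r * c ∧ d ^ 2 = (2 + r ^ 2) * c ^ 2 := by
  obtain ⟨-, h2, -, h4, h5⟩ := h
  have hb : b = 0 := by simpa [hd] using h4
  have ha : a = r * c := by
    have : d * (a - r * c) = 0 := by simpa [hb] using h5.symm
    linear_combination (mul_eq_zero_iff_left hd).1 this
  refine ⟨hb, ha, mul_left_cancel₀ hr.ne' ?_⟩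
  linear_combination -h2 + (r ^ 2 + 2) * c * ha

lemma geodesicSystem_of_e_eq_zero (hb : b = 0) (ha : a = r * c)
    (hd : d ^ 2 = (2 + r ^ 2) * c ^ 2) : GeodesicSystem r a b c d 0 := by
  subst hb ha
  refine ⟨by ring, ?_, by ring, by ring, by ring⟩
  linear_combination -r * hd

/-- Family (i) before taking square roots. -/
def ReducedSystem (r a b c d e : ℝ) : Prop :=
  r ^ 2 * a = (r - 1) * (r ^ 2 + 1) * c ∧
  (r ^ 2 + 1) * (r ^ 2 - r + 1) * c ^ 2 = r ^ 3 * e ^ 2 ∧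
  (r ^ 2 - r + 1) * d ^ 2 = (r ^ 3 + r - 1) * e ^ 2 ∧
  r ^ 2 * (b * e) = -((r ^ 2 - r + 1) * c * d)

lemma GeodesicSystem.reducedSystem (hr : 0 < r) (h : GeodesicSystem r a b c d e) (hd : d ≠ 0)
    (he : e ≠ 0) : ReducedSystem r a b c d e := by
  obtain ⟨h1, h2, h3, -, h5⟩ := h
  have hC : (r ^ 2 + 1) * c * (a - r * c) + r * e ^ 2 = 0 := by
    refine (mul_eq_zero_iff_left hd).1 ?_
    linear_combination e * h1 - (r ^ 2 + 1) * c * h5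
  have hB : r * a * (a - r * c) - (1 - r) * e ^ 2 = 0 := by
    refine (mul_eq_zero_iff_left hd).1 ?_
    linear_combination -(r * a) * h5 + e * h3
  have hac : a - r * c ≠ 0 := by
    intro h
    have : r * e ^ 2 = 0 := by linear_combination hC - (r ^ 2 + 1) * c * h
    simp_all
  have h₁ : r ^ 2 * a = (r - 1) * (r ^ 2 + 1) * c := by
    have : (a - r * c) * (r ^ 2 * a + (1 - r) * (r ^ 2 + 1) * c) = 0 := by
      linear_combination r * hB + (1 - r) * hC
    linear_combination (mul_eq_zero_iff_left hac).1 this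
  have h₂ : (r ^ 2 + 1) * (r ^ 2 - r + 1) * c ^ 2 = r ^ 3 * e ^ 2 := by
    linear_combination -r ^ 2 * hC + (r ^ 2 + 1) * c * h₁
  refine ⟨h₁, h₂, mul_left_cancel₀ (pow_ne_zero 3 hr.ne') ?_, ?_⟩
  · linear_combination -(r ^ 2 * (r ^ 2 - r + 1)) * h2 + (r ^ 2 + 2) * (r ^ 2 - r + 1) * c * h₁
      + (r ^ 2 + 2) * (r - 1) * h₂
  · linear_combination r ^ 2 * h5 + d * h₁

lemma ReducedSystem.geodesicSystem (hr : 0 < r) (h : ReducedSystem r a b c d e) :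
    GeodesicSystem r a b c d e := by
  obtain ⟨h1, h2, h3, h4⟩ := h
  have hF₂ := sq_sub_self_add_one_pos r
  rcases eq_or_ne e 0 with rfl | he
  · have hc : c = 0 := by simpa [hF₂.ne', (by positivity : r ^ 2 + 1 ≠ 0)] using h2
    have hd : d = 0 := by simpa [hF₂.ne'] using h3
    have ha : a = 0 := by simpa [hc, hr.ne'] using h1
    subst ha hc hd
    simp [GeodesicSystem]
  have hr₂e : r ^ 2 * e ≠ 0 := by positivity
  refine ⟨mul_left_cancel₀ hr₂e ?_, mul_left_cancel₀ (mul_pos (pow_pos hr 2) hF₂).ne' ?_,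
    mul_left_cancel₀ (mul_ne_zero (pow_ne_zero 3 hr.ne') he) ?_, mul_left_cancel₀ hr₂e ?_,
    mul_left_cancel₀ (pow_ne_zero 2 hr.ne') ?_⟩
  · linear_combination (r ^ 2 + 1) * c * h4 - d * h2
  · linear_combination (r ^ 2 + 2) * (r ^ 2 - r + 1) * c * h1 + (r ^ 2 + 2) * (r - 1) * h2
      - r ^ 3 * h3
  · linear_combination r ^ 2 * a * h4 - (r ^ 2 - r + 1) * c * d * h1 - (r - 1) * d * h2
  · linear_combination d * h4 + e ^ 2 * h1 - c * h3
  · linear_combination h4 - d * h1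

lemma mul_sqrt_coeff_a (hr : 0 < r) :
    r * √((1 + r ^ 2) / (r * (r ^ 2 - r + 1))) =
      (r ^ 2 + 1) * √(r / ((r ^ 2 + 1) * (r ^ 2 - r + 1))) := by
  have hF₂ := sq_sub_self_add_one_pos r
  generalize r ^ 2 - r + 1 = p at hF₂ ⊢
  exact mul_sqrt_eq_mul_sqrt hr.le (by positivity) (by field_simp; ring)

lemma mul_sqrt_coeff_b (hr : 0 < r) :
    r * √((r ^ 3 + r - 1) / (r * (r ^ 2 + 1))) = (r ^ 2 - r + 1) *
      (√((r ^ 3 + r - 1) / (r ^ 2 - r + 1)) * √(r / ((r ^ 2 + 1) * (r ^ 2 - r + 1)))) := by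
  have hF₂ := sq_sub_self_add_one_pos r
  generalize r ^ 2 - r + 1 = p at hF₂ ⊢
  rw [← sqrt_mul' _ (by positivity)]
  exact mul_sqrt_eq_mul_sqrt hr.le hF₂.le (by field_simp)

lemma ReducedSystem.exists_signs (hr : 0 < r) (hF₃ : 0 ≤ r ^ 3 + r - 1) (he : e ≠ 0)
    (h : ReducedSystem r a b c d e) :
    ∃ ε₁ ε₂ : ℝ, (ε₁ = 1 ∨ ε₁ = -1) ∧ (ε₂ = 1 ∨ ε₂ = -1) ∧
      a = ε₁ * ε₂ * (1 - r) * √((1 + r ^ 2) / (r * (r ^ 2 - r + 1))) * e ∧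
      b = ε₂ * √((r ^ 3 + r - 1) / (r * (r ^ 2 + 1))) * e ∧
      c = -(ε₁ * ε₂ * r * √(r / ((r ^ 2 + 1) * (r ^ 2 - r + 1))) * e) ∧
      d = ε₁ * √((r ^ 3 + r - 1) / (r ^ 2 - r + 1)) * e := by
  obtain ⟨h1, h2, h3, h4⟩ := h
  have hA := mul_sqrt_coeff_a hr
  have hB := mul_sqrt_coeff_b hr
  have hF₂ := sq_sub_self_add_one_pos r
  have hsp : 0 < (r ^ 2 + 1) * (r ^ 2 - r + 1) := by positivity
  obtain ⟨σ, hσ, hc⟩ := (exists_sign_mul_sqrt_mul_iff (x := -c) (e := r * e)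
    (div_nonneg hr.le hsp.le)).2
      (by rw [div_mul_eq_mul_div, eq_div_iff hsp.ne']; linear_combination h2)
  obtain ⟨ε, hε, hd⟩ := (exists_sign_mul_sqrt_mul_iff (x := d) (e := e)
    (div_nonneg hF₃ hF₂.le)).2
      (by rw [div_mul_eq_mul_div, eq_div_iff hF₂.ne']; linear_combination h3)
  have hεσ : ε * (ε * σ) = σ := by rcases hε with rfl | rfl <;> ring
  refine ⟨ε, ε * σ, hε, ?_, ?_, ?_, ?_, hd⟩
  · rcases hε with rfl | rfl <;> rcases hσ with rfl | rfl <;> norm_num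
  · rw [hεσ]
    refine mul_left_cancel₀ (pow_ne_zero 2 hr.ne') ?_
    linear_combination h1 - r * σ * (1 - r) * e * hA - (r - 1) * (r ^ 2 + 1) * hc
  · refine mul_left_cancel₀ (mul_ne_zero (pow_ne_zero 2 hr.ne') he) ?_
    linear_combination h4 - r * e ^ 2 * ε * σ * hB + (r ^ 2 - r + 1) * d * hc
      + (r ^ 2 - r + 1) * σ * √(r / ((r ^ 2 + 1) * (r ^ 2 - r + 1))) * r * e * hd
  · rw [hεσ]
    linear_combination -hc

lemma reducedSystem_of_exists_signs (hr : 0 < r) (hF₃ : 0 ≤ r ^ 3 + r - 1)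
    (h : ∃ ε₁ ε₂ : ℝ, (ε₁ = 1 ∨ ε₁ = -1) ∧ (ε₂ = 1 ∨ ε₂ = -1) ∧
      a = ε₁ * ε₂ * (1 - r) * √((1 + r ^ 2) / (r * (r ^ 2 - r + 1))) * e ∧
      b = ε₂ * √((r ^ 3 + r - 1) / (r * (r ^ 2 + 1))) * e ∧
      c = -(ε₁ * ε₂ * r * √(r / ((r ^ 2 + 1) * (r ^ 2 - r + 1))) * e) ∧
      d = ε₁ * √((r ^ 3 + r - 1) / (r ^ 2 - r + 1)) * e) :
    ReducedSystem r a b c d e := by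
  obtain ⟨ε₁, ε₂, hε₁, hε₂, rfl, rfl, rfl, rfl⟩ := h
  have hA := mul_sqrt_coeff_a hr
  have hB := mul_sqrt_coeff_b hr
  have hF₂ := sq_sub_self_add_one_pos r
  have hsp : 0 < (r ^ 2 + 1) * (r ^ 2 - r + 1) := by positivity
  set U := √(r / ((r ^ 2 + 1) * (r ^ 2 - r + 1)))
  set T := √((r ^ 3 + r - 1) / (r ^ 2 - r + 1))
  have hU : (r ^ 2 + 1) * (r ^ 2 - r + 1) * U ^ 2 = r := by
    rw [sq_sqrt (div_nonneg hr.le hsp.le), mul_div_cancel₀ _ hsp.ne']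
  have hT : (r ^ 2 - r + 1) * T ^ 2 = r ^ 3 + r - 1 := by
    rw [sq_sqrt (div_nonneg hF₃ hF₂.le), mul_div_cancel₀ _ hF₂.ne']
  replace hε₁ : ε₁ ^ 2 = 1 := by rcases hε₁ with rfl | rfl <;> norm_num
  replace hε₂ : ε₂ ^ 2 = 1 := by rcases hε₂ with rfl | rfl <;> norm_num
  refine ⟨?_, ?_, ?_, ?_⟩
  · linear_combination r * ε₁ * ε₂ * (1 - r) * e * hA
  · linear_combination r ^ 2 * e ^ 2 * ε₁ ^ 2 * ε₂ ^ 2 * hU + r ^ 3 * e ^ 2 * ε₂ ^ 2 * hε₁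
      + r ^ 3 * e ^ 2 * hε₂
  · linear_combination ε₁ ^ 2 * e ^ 2 * hT + (r ^ 3 + r - 1) * e ^ 2 * hε₁
  · linear_combination r * ε₂ * e ^ 2 * hB - (r ^ 2 - r + 1) * ε₂ * r * U * T * e ^ 2 * hε₁

end

theorem geodesic_vectors_extended_siegel_jacobi_general
    (R₃ : ℝ) (hR₃ : R₃ ^ 3 + R₃ - 1 = 0)
    (r : ℝ) (hr : R₃ < r) (a b c d e : ℝ) :
    ((r + 1 / r) * b * c + d * e = 0 ∧
     -((r + 2 / r) * a * c) + d ^ 2 - e ^ 2 = 0 ∧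
     -(r * a * b) + (1 - r) * d * e = 0 ∧
     b * d + e * (a + c) = 0 ∧
     r * c * d + b * e - a * d = 0) ↔
    -- (i)
    ((∃ ε₁ ε₂ : ℝ, (ε₁ = 1 ∨ ε₁ = -1) ∧ (ε₂ = 1 ∨ ε₂ = -1) ∧
       a = ε₁ * ε₂ * (1 - r) * Real.sqrt ((1 + r ^ 2) / (r * (r ^ 2 - r + 1))) * e ∧
       b = ε₂ * Real.sqrt ((r ^ 3 + r - 1) / (r * (r ^ 2 + 1))) * e ∧
       c = -(ε₁ * ε₂ * r * Real.sqrt (r / ((r ^ 2 + 1) * (r ^ 2 - r + 1))) * e) ∧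
       d = ε₁ * Real.sqrt ((r ^ 3 + r - 1) / (r ^ 2 - r + 1)) * e) ∨
    -- (ii)
     (∃ ε : ℝ, (ε = 1 ∨ ε = -1) ∧
       a = ε * Real.sqrt (r / (r ^ 2 + 2)) * e ∧ b = 0 ∧
       c = -(ε * Real.sqrt (r / (r ^ 2 + 2)) * e) ∧ d = 0) ∨
    -- (iii)
     (∃ ε : ℝ, (ε = 1 ∨ ε = -1) ∧
       a = r * c ∧ b = 0 ∧ d = ε * Real.sqrt (2 + r ^ 2) * c ∧ e = 0) ∨
    -- (iv) a = b = d = e = 0, c arbitrary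
     (a = 0 ∧ b = 0 ∧ d = 0 ∧ e = 0) ∨
    -- (v) a = c = d = e = 0, b arbitrary
     (a = 0 ∧ c = 0 ∧ d = 0 ∧ e = 0) ∨
    -- (vi) b = c = d = e = 0, a arbitrary
     (b = 0 ∧ c = 0 ∧ d = 0 ∧ e = 0)) := by
  have hR₃pos : 0 < R₃ := by nlinarith [sq_nonneg R₃]
  have hr₀ : 0 < r := hR₃pos.trans hr
  have hF₃ : 0 ≤ r ^ 3 + r - 1 := by
    linarith [(Odd.strictMono_pow (R := ℝ) (by decide : Odd 3)) hr]
  have hv : 0 ≤ r / (r ^ 2 + 2) := by positivity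
  have hw : 0 ≤ 2 + r ^ 2 := by positivity
  rw [geodesicSystem_iff hr₀.ne']
  constructor
  · intro h
    rcases eq_or_ne d 0 with rfl | hd <;> rcases eq_or_ne e 0 with rfl | he
    · rcases pairwise_mul_eq_zero_iff.1 ((geodesicSystem_zero_zero_iff hr₀).1 h) with
        ⟨ha, hb⟩ | ⟨ha, hc⟩ | ⟨hb, hc⟩
      exacts [.inr (.inr (.inr (.inl ⟨ha, hb, rfl, rfl⟩))),
        .inr (.inr (.inr (.inr (.inl ⟨ha, hc, rfl, rfl⟩)))),
        .inr (.inr (.inr (.inr (.inr ⟨hb, hc, rfl, rfl⟩))))]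
    · obtain ⟨hb, hc, ha⟩ := h.of_d_eq_zero hr₀ he
      obtain ⟨ε, hε, ha⟩ := (exists_sign_mul_sqrt_mul_iff hv).2 ha
      exact .inr (.inl ⟨ε, hε, ha, hb, by rw [hc, ha], rfl⟩)
    · obtain ⟨hb, ha, hd⟩ := h.of_e_eq_zero hr₀ hd
      obtain ⟨ε, hε, hd⟩ := (exists_sign_mul_sqrt_mul_iff hw).2 hd
      exact .inr (.inr (.inl ⟨ε, hε, ha, hb, hd, rfl⟩))
    · exact .inl ((h.reducedSystem hr₀ hd he).exists_signs hr₀ hF₃ he)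
  · rintro (h | ⟨ε, hε, ha, hb, hc, rfl⟩ | ⟨ε, hε, ha, hb, hd, rfl⟩ | ⟨ha, hb, rfl, rfl⟩ |
      ⟨ha, hc, rfl, rfl⟩ | ⟨hb, hc, rfl, rfl⟩)
    · exact (reducedSystem_of_exists_signs hr₀ hF₃ h).geodesicSystem hr₀
    · exact geodesicSystem_of_d_eq_zero hr₀ hb (by rw [hc, ha])
        ((exists_sign_mul_sqrt_mul_iff hv).1 ⟨ε, hε, ha⟩)
    · exact geodesicSystem_of_e_eq_zero hb ha
        ((exists_sign_mul_sqrt_mul_iff hw).1 ⟨ε, hε, hd⟩)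
    all_goals
      refine (geodesicSystem_zero_zero_iff hr₀).2 (pairwise_mul_eq_zero_iff.2 ?_)
      tauto

theorem geodesic_vectors_extended_siegel_jacobi
    (R₃ : ℝ) (hR₃ : R₃ ^ 3 + R₃ - 1 = 0)
    (hR₃uniq : ∀ s : ℝ, s ^ 3 + s - 1 = 0 → s = R₃)
    (r : ℝ) (hr : R₃ < r) (a b c d e : ℝ) :
    ((r + 1 / r) * b * c + d * e = 0 ∧
     -((r + 2 / r) * a * c) + d ^ 2 - e ^ 2 = 0 ∧
     -(r * a * b) + (1 - r) * d * e = 0 ∧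
     b * d + e * (a + c) = 0 ∧
     r * c * d + b * e - a * d = 0) ↔
    -- (i)
    ((∃ ε₁ ε₂ : ℝ, (ε₁ = 1 ∨ ε₁ = -1) ∧ (ε₂ = 1 ∨ ε₂ = -1) ∧
       a = ε₁ * ε₂ * (1 - r) * Real.sqrt ((1 + r ^ 2) / (r * (r ^ 2 - r + 1))) * e ∧
       b = ε₂ * Real.sqrt ((r ^ 3 + r - 1) / (r * (r ^ 2 + 1))) * e ∧
       c = -(ε₁ * ε₂ * r * Real.sqrt (r / ((r ^ 2 + 1) * (r ^ 2 - r + 1))) * e) ∧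
       d = ε₁ * Real.sqrt ((r ^ 3 + r - 1) / (r ^ 2 - r + 1)) * e) ∨
    -- (ii)
     (∃ ε : ℝ, (ε = 1 ∨ ε = -1) ∧
       a = ε * Real.sqrt (r / (r ^ 2 + 2)) * e ∧ b = 0 ∧
       c = -(ε * Real.sqrt (r / (r ^ 2 + 2)) * e) ∧ d = 0) ∨
    -- (iii)
     (∃ ε : ℝ, (ε = 1 ∨ ε = -1) ∧
       a = r * c ∧ b = 0 ∧ d = ε * Real.sqrt (2 + r ^ 2) * c ∧ e = 0) ∨
    -- (iv) a = b = d = e = 0, c arbitrary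
     (a = 0 ∧ b = 0 ∧ d = 0 ∧ e = 0) ∨
    -- (v) a = c = d = e = 0, b arbitrary
     (a = 0 ∧ c = 0 ∧ d = 0 ∧ e = 0) ∨
    -- (vi) b = c = d = e = 0, a arbitrary
     (b = 0 ∧ c = 0 ∧ d = 0 ∧ e = 0)) :=
  geodesic_vectors_extended_siegel_jacobi_general R₃ hR₃ r hr a b c d e

end Stmt18
end
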